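/- Let m > n be positive integers and a, b ∈ ℝ. With ψ(x,y) = -cos(mx)cos(ny) and f(x,y) = cos(x)·(1 + a·cos(2mx) + b·cos(2ny)), the function φ = {ψ, f} satisfies the exact identity ∫₀^{2π}∫₀^{2π} ((∂ₓφ)² + (∂_yφ)² − (m²+n²)φ²) dx dy = (π²n²/4)·H(a,b,m,n), where H(a,b,m,n) = 16a²m⁴ + 16b²m²n² + 24a²m² − 12abm² + 4b²m² + 4b²n² + 8am² − 8bm² + a² − ab + b² + 2a − 2b + 2. -/

import Mathlib

open Real MeasureTheory

/-- Partial derivative in the first variable of a curried function `ℝ → ℝ → ℝ`. -/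
noncomputable def pdx (φ : ℝ → ℝ → ℝ) (x y : ℝ) : ℝ := deriv (fun t => φ t y) x

/-- Partial derivative in the second variable of a curried function `ℝ → ℝ → ℝ`. -/
noncomputable def pdy (φ : ℝ → ℝ → ℝ) (x y : ℝ) : ℝ := deriv (fun t => φ x t) y

/-- Poisson bracket `{ψ, f} = ∂ₓψ ∂_y f − ∂_y ψ ∂ₓ f`. -/
noncomputable def pb (ψ f : ℝ → ℝ → ℝ) : ℝ → ℝ → ℝ :=
  fun x y => pdx ψ x y * pdy f x y - pdy ψ x y * pdx f x y

/-- Misiołek index with coefficient `lam2` (usually `m² + n²`):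
`∫₀^{2π}∫₀^{2π} ((∂ₓφ)² + (∂_yφ)² − lam2·φ²) dx dy`. -/
noncomputable def MI (lam2 : ℝ) (φ : ℝ → ℝ → ℝ) : ℝ :=
  ∫ y in (0:ℝ)..(2 * π), ∫ x in (0:ℝ)..(2 * π),
    ((pdx φ x y) ^ 2 + (pdy φ x y) ^ 2 - lam2 * (φ x y) ^ 2)

/-- The quadratic polynomial `H(a,b,m,n)` from the off-diagonal case. -/
def Hoff (a b m n : ℝ) : ℝ :=
  16 * a ^ 2 * m ^ 4 + 16 * b ^ 2 * m ^ 2 * n ^ 2 + 24 * a ^ 2 * m ^ 2 -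
    12 * a * b * m ^ 2 + 4 * b ^ 2 * m ^ 2 + 4 * b ^ 2 * n ^ 2 + 8 * a * m ^ 2 -
    8 * b * m ^ 2 + a ^ 2 - a * b + b ^ 2 + 2 * a - 2 * b + 2

/-! The bracket `{ψ, f}` is, by the product-to-sum formulas, a finite double sine series
`∑ c i j * sin (k i * x) * sin (l j * y)` with `x`-frequencies `m ± 1, 3m ± 1` and
`y`-frequencies `n, 3n`. As `m ≥ 2` these are positive and pairwise distinct, so orthogonality of
`sin (k x)` and of `cos (k x)` on `[0, 2π]` (applied first in `x`, then in `y`) gives the index of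
such a series as `π² ∑ c i j ² (k i ² + l j ² - (m² + n²))`; summing the eight terms yields `H`. -/

section Orthogonality

variable {ι : Type*} [Fintype ι] [DecidableEq ι]

lemma integral_cos_int_mul (j : ℤ) :
    ∫ x in (0 : ℝ)..(2 * π), cos (j * x) = if j = 0 then 2 * π else 0 := by
  split_ifs with hj
  · simp [hj]
  · rw [intervalIntegral.integral_comp_mul_left (fun x => cos x) (Int.cast_ne_zero.mpr hj),
      integral_cos, show (j : ℝ) * (2 * π) = ((2 * j : ℤ) : ℝ) * π by push_cast; ring,
      sin_int_mul_pi]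
    simp

lemma integral_sin_int_mul_mul_sin_int_mul {k l : ℤ} (hk : 0 < k) (hl : 0 < l) :
    ∫ x in (0 : ℝ)..(2 * π), sin (k * x) * sin (l * x) = if k = l then π else 0 := by
  have h (x : ℝ) : sin (k * x) * sin (l * x) =
      cos (((k - l : ℤ) : ℝ) * x) / 2 - cos (((k + l : ℤ) : ℝ) * x) / 2 := by
    push_cast; rw [sub_mul, add_mul, cos_sub, cos_add]; ring
  simp_rw [h]
  rw [intervalIntegral.integral_sub ((by fun_prop : Continuous _).intervalIntegrable _ _)
    ((by fun_prop : Continuous _).intervalIntegrable _ _), intervalIntegral.integral_div,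
    intervalIntegral.integral_div, integral_cos_int_mul, integral_cos_int_mul]
  simp only [sub_eq_zero, show k + l ≠ 0 by omega, if_false]
  split_ifs <;> ring

lemma integral_cos_int_mul_mul_cos_int_mul {k l : ℤ} (hk : 0 < k) (hl : 0 < l) :
    ∫ x in (0 : ℝ)..(2 * π), cos (k * x) * cos (l * x) = if k = l then π else 0 := by
  have h (x : ℝ) : cos (k * x) * cos (l * x) =
      cos (((k - l : ℤ) : ℝ) * x) / 2 + cos (((k + l : ℤ) : ℝ) * x) / 2 := by
    push_cast; rw [sub_mul, add_mul, cos_sub, cos_add]; ring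
  simp_rw [h]
  rw [intervalIntegral.integral_add ((by fun_prop : Continuous _).intervalIntegrable _ _)
    ((by fun_prop : Continuous _).intervalIntegrable _ _), intervalIntegral.integral_div,
    intervalIntegral.integral_div, integral_cos_int_mul, integral_cos_int_mul]
  simp only [sub_eq_zero, show k + l ≠ 0 by omega, if_false]
  split_ifs <;> ring

lemma integral_sq_sum_of_orthogonal {a b c : ℝ} (e : ι → ℝ → ℝ)
    (hint : ∀ i j, IntervalIntegrable (fun x => e i x * e j x) volume a b)
    (horth : ∀ i j, ∫ x in a..b, e i x * e j x = if i = j then c else 0) (A : ι → ℝ) :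
    ∫ x in a..b, (∑ i, A i * e i x) ^ 2 = c * ∑ i, A i ^ 2 := by
  have h (x : ℝ) : (∑ i, A i * e i x) ^ 2 = ∑ i, ∑ j, A i * A j * (e i x * e j x) := by
    rw [sq, Finset.sum_mul_sum]
    exact Finset.sum_congr rfl fun i _ => Finset.sum_congr rfl fun j _ => by ring
  simp_rw [h]
  have hij (i j : ι) : IntervalIntegrable (fun x => A i * A j * (e i x * e j x)) volume a b :=
    (hint i j).const_mul _
  rw [intervalIntegral.integral_finsetSum fun i _ => by
    simpa only [Finset.sum_fn] using IntervalIntegrable.sum Finset.univ fun j _ => hij i j]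
  simp_rw [intervalIntegral.integral_finsetSum fun j _ => hij _ j,
    intervalIntegral.integral_const_mul, horth, mul_ite, mul_zero, Finset.sum_ite_eq,
    Finset.mem_univ, if_true, Finset.mul_sum]
  exact Finset.sum_congr rfl fun i _ => by ring

end Orthogonality

section TrigonometricSums

variable {ι κ : Type*} [Fintype ι] [Fintype κ]

noncomputable def sinSum (k : ι → ℤ) (A : ι → ℝ) (x : ℝ) : ℝ := ∑ i, A i * sin (k i * x)

noncomputable def cosSum (k : ι → ℤ) (A : ι → ℝ) (x : ℝ) : ℝ := ∑ i, A i * cos (k i * x)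

/-- `∑ i, ∑ j, c i j * sin (k i * x) * sin (l j * y)`, grouped by the `x`-frequencies. -/
noncomputable def doubleSinSum (k : ι → ℤ) (l : κ → ℤ) (c : ι → κ → ℝ) (x y : ℝ) : ℝ :=
  sinSum k (fun i => sinSum l (c i) y) x

@[fun_prop]
lemma continuous_sinSum (k : ι → ℤ) (A : ι → ℝ) : Continuous (sinSum k A) := by
  unfold sinSum; fun_prop

@[fun_prop]
lemma continuous_cosSum (k : ι → ℤ) (A : ι → ℝ) : Continuous (cosSum k A) := by
  unfold cosSum; fun_prop

lemma mul_sinSum (r : ℝ) (k : ι → ℤ) (A : ι → ℝ) (x : ℝ) :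
    r * sinSum k A x = sinSum k (fun i => r * A i) x := by
  simp only [sinSum, Finset.mul_sum, mul_assoc]

lemma hasDerivAt_sinSum (k : ι → ℤ) (A : ι → ℝ) (x : ℝ) :
    HasDerivAt (sinSum k A) (cosSum k (fun i => k i * A i) x) x := by
  refine (HasDerivAt.fun_sum fun i _ =>
    (((hasDerivAt_id' x).const_mul (k i : ℝ)).sin).const_mul (A i)).congr_deriv ?_
  exact Finset.sum_congr rfl fun i _ => by ring

lemma integral_sq_sinSum {k : ι → ℤ} (hk : ∀ i, 0 < k i) (hinj : k.Injective) (A : ι → ℝ) :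
    ∫ x in (0 : ℝ)..(2 * π), sinSum k A x ^ 2 = π * ∑ i, A i ^ 2 := by
  classical
  refine integral_sq_sum_of_orthogonal _ (fun i j => (by fun_prop : Continuous _).intervalIntegrable _ _)
    (fun i j => ?_) A
  simp only [integral_sin_int_mul_mul_sin_int_mul (hk i) (hk j), hinj.eq_iff]

lemma integral_sq_cosSum {k : ι → ℤ} (hk : ∀ i, 0 < k i) (hinj : k.Injective) (A : ι → ℝ) :
    ∫ x in (0 : ℝ)..(2 * π), cosSum k A x ^ 2 = π * ∑ i, A i ^ 2 := by
  classical
  refine integral_sq_sum_of_orthogonal _ (fun i j => (by fun_prop : Continuous _).intervalIntegrable _ _)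
    (fun i j => ?_) A
  simp only [integral_cos_int_mul_mul_cos_int_mul (hk i) (hk j), hinj.eq_iff]

lemma integral_sq_cosSum_add_sq_sinSum_sub {k : ι → ℤ} (hk : ∀ i, 0 < k i) (hinj : k.Injective)
    (lam : ℝ) (A B C : ι → ℝ) :
    ∫ x in (0 : ℝ)..(2 * π), (cosSum k A x ^ 2 + sinSum k B x ^ 2 - lam * sinSum k C x ^ 2) =
      π * ∑ i, (A i ^ 2 + B i ^ 2 - lam * C i ^ 2) := by
  have hint {f : ℝ → ℝ} (hf : Continuous f) : IntervalIntegrable f volume 0 (2 * π) :=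
    hf.intervalIntegrable _ _
  rw [intervalIntegral.integral_sub (hint (by fun_prop)) (hint (by fun_prop)),
    intervalIntegral.integral_add (hint (by fun_prop)) (hint (by fun_prop)),
    intervalIntegral.integral_const_mul, integral_sq_cosSum hk hinj, integral_sq_sinSum hk hinj,
    integral_sq_sinSum hk hinj]
  simp only [Finset.mul_sum, ← Finset.sum_add_distrib, ← Finset.sum_sub_distrib]
  exact Finset.sum_congr rfl fun i _ => by ring

lemma pdx_doubleSinSum (k : ι → ℤ) (l : κ → ℤ) (c : ι → κ → ℝ) (x y : ℝ) :
    pdx (doubleSinSum k l c) x y = cosSum k (fun i => k i * sinSum l (c i) y) x :=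
  (hasDerivAt_sinSum k _ x).deriv

lemma pdy_doubleSinSum (k : ι → ℤ) (l : κ → ℤ) (c : ι → κ → ℝ) (x y : ℝ) :
    pdy (doubleSinSum k l c) x y = sinSum k (fun i => cosSum l (fun j => l j * c i j) y) x :=
  (HasDerivAt.fun_sum fun i _ => (hasDerivAt_sinSum l (c i) y).mul_const _).deriv

theorem MI_doubleSinSum {k : ι → ℤ} {l : κ → ℤ} (hk : ∀ i, 0 < k i) (hkinj : k.Injective)
    (hl : ∀ j, 0 < l j) (hlinj : l.Injective) (lam : ℝ) (c : ι → κ → ℝ) :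
    MI lam (doubleSinSum k l c) = π ^ 2 * ∑ i, ∑ j, c i j ^ 2 * (k i ^ 2 + l j ^ 2 - lam) := by
  have hinner (y : ℝ) : ∫ x in (0 : ℝ)..(2 * π),
      (pdx (doubleSinSum k l c) x y ^ 2 + pdy (doubleSinSum k l c) x y ^ 2
        - lam * doubleSinSum k l c x y ^ 2) =
      π * ∑ i, (cosSum l (fun j => l j * c i j) y ^ 2 + sinSum l (fun j => k i * c i j) y ^ 2
        - lam * sinSum l (c i) y ^ 2) := by
    simp only [pdx_doubleSinSum, pdy_doubleSinSum, doubleSinSum]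
    rw [integral_sq_cosSum_add_sq_sinSum_sub hk hkinj]
    congr 1
    exact Finset.sum_congr rfl fun i _ => by rw [mul_sinSum]; ring
  have houter (i : ι) : ∫ y in (0 : ℝ)..(2 * π),
      (cosSum l (fun j => l j * c i j) y ^ 2 + sinSum l (fun j => k i * c i j) y ^ 2
        - lam * sinSum l (c i) y ^ 2) =
      π * ∑ j, c i j ^ 2 * (k i ^ 2 + l j ^ 2 - lam) := by
    rw [integral_sq_cosSum_add_sq_sinSum_sub hl hlinj]
    simp only [mul_pow]
    congr 1
    exact Finset.sum_congr rfl fun j _ => by ring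
  unfold MI
  simp_rw [hinner]
  rw [intervalIntegral.integral_const_mul, intervalIntegral.integral_finsetSum fun i _ =>
    (by fun_prop : Continuous _).intervalIntegrable _ _]
  simp_rw [houter, Finset.mul_sum]
  exact Finset.sum_congr rfl fun i _ => Finset.sum_congr rfl fun j _ => by ring

end TrigonometricSums

section OffDiagonal

def offDiagFreqX (m : ℕ) : Fin 4 → ℤ := ![m - 1, m + 1, 3 * m - 1, 3 * m + 1]

def offDiagFreqY (n : ℕ) : Fin 2 → ℤ := ![n, 3 * n]

noncomputable def offDiagCoeff (a b : ℝ) (m n : ℕ) : Fin 4 → Fin 2 → ℝ :=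
  ![![n / 4 * (-2 - a + 2 * a * m + b - 2 * b * m), -n / 4 * b * (2 * m + 1)],
    ![n / 4 * (2 + a + 2 * a * m - b - 2 * b * m), n / 4 * b * (1 - 2 * m)],
    ![n / 4 * a * (2 * m - 1), 0],
    ![n / 4 * a * (2 * m + 1), 0]]

lemma offDiagFreqX_pos {m : ℕ} (hm : 2 ≤ m) (i : Fin 4) : 0 < offDiagFreqX m i := by
  fin_cases i <;> simp [offDiagFreqX] <;> omega

lemma offDiagFreqX_injective {m : ℕ} (hm : 2 ≤ m) : (offDiagFreqX m).Injective := by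
  intro i j h
  fin_cases i <;> fin_cases j <;> simp [offDiagFreqX] at h ⊢ <;> omega

lemma offDiagFreqY_pos {n : ℕ} (hn : 0 < n) (j : Fin 2) : 0 < offDiagFreqY n j := by
  fin_cases j <;> simp [offDiagFreqY] <;> omega

lemma offDiagFreqY_injective {n : ℕ} (hn : 0 < n) : (offDiagFreqY n).Injective := by
  intro i j h
  fin_cases i <;> fin_cases j <;> simp [offDiagFreqY] at h ⊢ <;> omega

lemma offDiag_bracket_eq_doubleSinSum (m n : ℕ) (a b x y : ℝ) :
    m * sin (m * x) * cos (n * y) * (cos x * -(2 * b * n * sin (2 * n * y))) -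
        n * cos (m * x) * sin (n * y) *
          (-(sin x * (1 + a * cos (2 * m * x) + b * cos (2 * n * y))) -
            2 * a * m * cos x * sin (2 * m * x)) =
      doubleSinSum (offDiagFreqX m) (offDiagFreqY n) (offDiagCoeff a b m n) x y := by
  simp only [doubleSinSum, sinSum, Fin.sum_univ_four, Fin.sum_univ_two, offDiagFreqX,
    offDiagFreqY, offDiagCoeff, Matrix.cons_val_zero, Matrix.cons_val_one, Matrix.head_cons,
    Matrix.cons_val_two, Matrix.tail_cons, Matrix.cons_val_three]
  push_cast
  simp only [show ((m : ℝ) - 1) * x = m * x - x by ring, show ((m : ℝ) + 1) * x = m * x + x by ring,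
    show (3 * (m : ℝ) - 1) * x = (m * x + m * x + m * x) - x by ring,
    show (3 * (m : ℝ) + 1) * x = (m * x + m * x + m * x) + x by ring,
    show 2 * (m : ℝ) * x = m * x + m * x by ring, show 3 * (n : ℝ) * y = n * y + n * y + n * y by ring,
    show 2 * (n : ℝ) * y = n * y + n * y by ring, sin_add, cos_add, sin_sub]
  linear_combination
    (n / 2 * a * cos (m * x) * sin x * sin (n * y) + m * n * a * sin (m * x) * cos x * sin (n * y)) *
        sin_sq_add_cos_sq ((m : ℝ) * x) -
      (n / 2 * b * cos (m * x) * sin x * sin (n * y) + m * n * b * sin (m * x) * cos x * sin (n * y)) *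
        sin_sq_add_cos_sq ((n : ℝ) * y)

lemma pb_offDiag (m n : ℕ) (a b : ℝ) :
    pb (fun x y => -(cos (m * x) * cos (n * y)))
        (fun x y => cos x * (1 + a * cos (2 * m * x) + b * cos (2 * n * y))) =
      doubleSinSum (offDiagFreqX m) (offDiagFreqY n) (offDiagCoeff a b m n) := by
  have hcos (c t : ℝ) : HasDerivAt (fun s => cos (c * s)) (-(c * sin (c * t))) t := by
    simpa [mul_comm] using ((hasDerivAt_id' t).const_mul c).cos
  funext x y
  rw [← offDiag_bracket_eq_doubleSinSum]
  unfold pb pdx pdy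
  beta_reduce
  rw [((hcos m x).mul_const _).fun_neg.deriv, ((hcos n y).const_mul _).fun_neg.deriv,
    ((hasDerivAt_cos x).fun_mul (((hcos _ x).const_mul a).const_add 1 |>.add_const _)).deriv,
    ((((hcos _ y).const_mul b).const_add _).const_mul _).deriv]
  ring

end OffDiagonal

/-- Exact evaluation of the Misiołek index of the two-parameter family of
variations in the off-diagonal case. -/
theorem misiolek_index_offdiagonal_formula (m n : ℕ) (hn : 0 < n) (hmn : n < m)
    (a b : ℝ) :
    let ψ : ℝ → ℝ → ℝ := fun x y => -(Real.cos (m * x) * Real.cos (n * y))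
    let f : ℝ → ℝ → ℝ := fun x y =>
      Real.cos x * (1 + a * Real.cos (2 * m * x) + b * Real.cos (2 * n * y))
    MI ((m : ℝ) ^ 2 + (n : ℝ) ^ 2) (pb ψ f) =
      (π ^ 2 * (n : ℝ) ^ 2 / 4) * Hoff a b (m : ℝ) (n : ℝ) := by
  intro ψ f
  have hm : 2 ≤ m := by omega
  rw [show pb ψ f = _ from pb_offDiag m n a b,
    MI_doubleSinSum (offDiagFreqX_pos hm) (offDiagFreqX_injective hm) (offDiagFreqY_pos hn)
      (offDiagFreqY_injective hn)]
  simp only [Fin.sum_univ_four, Fin.sum_univ_two, offDiagFreqX, offDiagFreqY, offDiagCoeff,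
    Matrix.cons_val_zero, Matrix.cons_val_one, Matrix.cons_val_two, Matrix.cons_val_three,
    Matrix.head_cons, Matrix.tail_cons, Hoff]
  push_cast
  ring
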